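/- Fix constants $1 \le r \le p \le \beta \le \infty$ with $r < p$ (or $r \le p$ and $r < \infty$), let $q$ be given by $1/p - 1/q = 1/\beta$, and let $\omega$ be a weight on $\mathbb{R}^n$. If there is $C$ such that $\|(\mathbf{A}_{\beta, r, Q} f)\,\omega\|_q \le C\|f\omega\|_p$ for all functions $f$ and all cubes $Q$ (where $\mathbf{A}_{\beta, r, Q} f = \chi_Q |Q|^{1/\beta - 1/r}\|f\chi_Q\|_r$), then $\omega$ satisfies $\|\omega\chi_Q\|_q \, \|\omega^{-1}\chi_Q\|_{\frac{pr}{p-r}} \le C' |Q|^{\frac{\beta - r}{\beta r}}$ uniformly over cubes $Q$. -/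

import Mathlib

/-!
Testing the hypothesis on functions supported in a cube `Q` says that
`M ‖g‖_{L^r(Q)} ≤ C ‖g ω‖_{L^p(Q)}` with `M = |Q|^{1/β - 1/r} ‖ω χ_Q‖_q`. This is a converse
Hölder situation: it forces `M ‖ω⁻¹‖_{L^t(Q)} ≤ C` for `1/r = 1/p + 1/t`. When `t < ∞`, test with
`g = h^{t/r}` for the truncations `h = min(ω⁻¹, N + 1)`, for which `‖g‖_r = ‖h‖_t^{t/r}` and
`‖g ω‖_p ≤ ‖h‖_t^{t/p}`, cancel, and let `N → ∞` by Fatou. When `t = ∞` (so `r = p`), test with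
indicators of the superlevel sets `{ω⁻¹ > b}`.
-/

open MeasureTheory Set ENNReal

/-- The axis-parallel cube in `ℝⁿ` with center `c` and side length `ℓ`. -/
def cube (n : ℕ) (c : Fin n → ℝ) (ℓ : ℝ) : Set (Fin n → ℝ) :=
  {x | ∀ i, |x i - c i| ≤ ℓ / 2}

open Filter Topology

namespace ENNReal

theorem toReal_add_of_one_div_ofReal_eq {r : ℝ} (hr : 0 < r) {a b : ℝ≥0∞}
    (h : 1 / ENNReal.ofReal r = a + b) : 1 / r = a.toReal + b.toReal := by
  have hfin : a + b ≠ ∞ := h ▸ by simpa using hr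
  rw [← ENNReal.toReal_add (ENNReal.add_ne_top.1 hfin).1 (ENNReal.add_ne_top.1 hfin).2, ← h,
    one_div, one_div, ENNReal.toReal_inv, toReal_ofReal hr.le]

theorem rpow_mul_inv_rpow_add_mul_rpow {A : ℝ≥0∞} (hA0 : A ≠ 0) (hA : A ≠ ∞) (a b : ℝ) :
    A ^ a * (A ^ (a + b))⁻¹ * A ^ b = 1 := by
  rw [← ENNReal.rpow_neg, ← ENNReal.rpow_add _ _ hA0 hA, ← ENNReal.rpow_add _ _ hA0 hA,
    show a + -(a + b) + b = 0 by ring, ENNReal.rpow_zero]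

end ENNReal

def WeightedLpBound {α : Type*} [MeasurableSpace α] (μ : Measure α) (ω : α → ℝ) (r p : ℝ)
    (M K : ℝ≥0∞) : Prop :=
  ∀ g : α → ℝ, Measurable g →
    M * eLpNorm g (ENNReal.ofReal r) μ ≤ K * eLpNorm (fun x => g x * ω x) (ENNReal.ofReal p) μ

namespace WeightedLpBound

variable {α : Type*} [MeasurableSpace α] {μ : Measure α} {ω : α → ℝ} {r p : ℝ} {M K : ℝ≥0∞}

theorem mul_eLpNorm_le_of_le_inv (H : WeightedLpBound μ ω r p M K) (hr : 0 < r) (hp : 0 < p)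
    {τ : ℝ} (hτ : 0 < τ) (hrpτ : 1 / r = 1 / p + 1 / τ) (hωpos : ∀ x, 0 < ω x)
    {h : α → ℝ} (hh : Measurable h) (hpos : ∀ x, 0 < h x) (hle : ∀ x, h x ≤ (ω x)⁻¹)
    (hfin : eLpNorm h (ENNReal.ofReal τ) μ ≠ ∞) :
    M * eLpNorm h (ENNReal.ofReal τ) μ ≤ K := by
  set X := eLpNorm h (ENNReal.ofReal τ) μ
  have hexp : τ / r = τ / p + 1 := by
    rw [div_eq_mul_one_div τ r, hrpτ]; field_simp
  have hnorm : ∀ x, ‖h x‖ = h x := fun x => Real.norm_of_nonneg (hpos x).le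
  have hg : eLpNorm (fun x => h x ^ (τ / r)) (ENNReal.ofReal r) μ = X ^ (τ / r) := by
    rw [show (fun x => h x ^ (τ / r)) = fun x => ‖h x‖ ^ (τ / r) by simp only [hnorm],
      eLpNorm_norm_rpow h (by positivity), ← ENNReal.ofReal_mul hr.le, mul_div_cancel₀ τ hr.ne']
  have hgω : eLpNorm (fun x => h x ^ (τ / r) * ω x) (ENNReal.ofReal p) μ ≤ X ^ (τ / p) := by
    calc eLpNorm (fun x => h x ^ (τ / r) * ω x) (ENNReal.ofReal p) μ
        ≤ eLpNorm (fun x => ‖h x‖ ^ (τ / p)) (ENNReal.ofReal p) μ := by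
          refine eLpNorm_mono_real fun x => ?_
          have hhω : h x * ω x ≤ 1 := by
            have := mul_le_mul_of_nonneg_right (hle x) (hωpos x).le
            rwa [inv_mul_cancel₀ (hωpos x).ne'] at this
          rw [hnorm, hexp, Real.rpow_add (hpos x), Real.rpow_one, mul_assoc, Real.norm_eq_abs,
            abs_of_nonneg (by have := hωpos x; have := hpos x; positivity)]
          exact mul_le_of_le_one_right (by have := hpos x; positivity) hhω
      _ = X ^ (τ / p) := by
          rw [eLpNorm_norm_rpow h (by positivity), ← ENNReal.ofReal_mul hp.le,
            mul_div_cancel₀ τ hp.ne']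
  have htest := (H _ (hh.pow_const _)).trans (mul_le_mul_right hgω K)
  rw [hg, hexp, ENNReal.rpow_add_of_nonneg _ _ (by positivity) zero_le_one, ENNReal.rpow_one,
    mul_left_comm, mul_comm K] at htest
  rcases eq_or_ne X 0 with hX | hX
  · simp [hX]
  exact (ENNReal.mul_le_mul_iff_right (ENNReal.rpow_pos (pos_iff_ne_zero.2 hX) hfin).ne'
    (ENNReal.rpow_ne_top_of_nonneg (by positivity) hfin)).1 htest

theorem mul_eLpNorm_inv_top_le [IsFiniteMeasure μ] (H : WeightedLpBound μ ω p p M K) (hp : 0 < p)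
    (hω : Measurable ω) (hωpos : ∀ x, 0 < ω x) :
    M * eLpNorm (fun x => (ω x)⁻¹) ∞ μ ≤ K := by
  rw [eLpNorm_exponent_top, eLpNormEssSup, mul_comm]
  refine ENNReal.mul_le_of_forall_lt fun b hb a ha => ?_
  rcases eq_or_ne b 0 with rfl | hb0
  · simp
  set E := {x | b < ‖(ω x)⁻¹‖ₑ}
  have hE : MeasurableSet E := measurableSet_lt measurable_const hω.inv.enorm
  have hEpos : μ E ≠ 0 := by
    intro hE0
    have hae : ∀ᵐ x ∂μ, ‖(ω x)⁻¹‖ₑ ≤ b :=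
      (measure_eq_zero_iff_ae_notMem.1 hE0).mono fun x hx => not_lt.1 hx
    exact (essSup_le_of_ae_le b hae).not_gt hb
  have hEp : μ E ^ (1 / p) ≠ 0 :=
    (ENNReal.rpow_pos (pos_iff_ne_zero.2 hEpos) (measure_ne_top μ E)).ne'
  have hEp' : μ E ^ (1 / p) ≠ ∞ :=
    ENNReal.rpow_ne_top_of_nonneg (by positivity) (measure_ne_top μ E)
  have hp' : ENNReal.ofReal p ≠ 0 := by simpa using hp
  have hg : eLpNorm (E.indicator fun _ => (1 : ℝ)) (ENNReal.ofReal p) μ = μ E ^ (1 / p) := by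
    rw [eLpNorm_indicator_const hE hp' ofReal_ne_top, ENNReal.toReal_ofReal hp.le]; simp
  have hgω : eLpNorm (fun x => E.indicator (fun _ => (1 : ℝ)) x * ω x) (ENNReal.ofReal p) μ ≤
      b⁻¹ * μ E ^ (1 / p) := by
    calc _ ≤ eLpNorm (E.indicator fun _ => b⁻¹) (ENNReal.ofReal p) μ := by
          refine eLpNorm_mono_enorm fun x => ?_
          by_cases hx : x ∈ E
          · simp only [indicator_of_mem hx, one_mul, enorm_eq_self]
            have hbx : b < ‖(ω x)⁻¹‖ₑ := hx
            rw [enorm_inv (hωpos x).ne'] at hbx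
            exact ENNReal.le_inv_iff_le_inv.1 hbx.le
          · simp [indicator_of_notMem hx]
      _ = b⁻¹ * μ E ^ (1 / p) := by
          rw [eLpNorm_indicator_const hE hp' ofReal_ne_top, ENNReal.toReal_ofReal hp.le]; simp
  have htest := (H _ (measurable_const.indicator hE)).trans (mul_le_mul_right hgω K)
  rw [hg, ← mul_assoc, ENNReal.mul_le_mul_iff_left hEp hEp'] at htest
  calc b * a ≤ b * M := mul_le_mul_right ha.le b
    _ ≤ b * (K * b⁻¹) := mul_le_mul_right htest b
    _ = K := by rw [mul_comm K, ← mul_assoc, ENNReal.mul_inv_cancel hb0 hb.ne_top, one_mul]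

theorem mul_eLpNorm_inv_le_of_lt_top [IsFiniteMeasure μ] (H : WeightedLpBound μ ω r p M K)
    (hr : 0 < r) (hp : 0 < p) {τ : ℝ} (hτ : 0 < τ) (hrpτ : 1 / r = 1 / p + 1 / τ)
    (hω : Measurable ω) (hωpos : ∀ x, 0 < ω x) :
    M * eLpNorm (fun x => (ω x)⁻¹) (ENNReal.ofReal τ) μ ≤ K := by
  set h : ℕ → α → ℝ := fun N x => min (ω x)⁻¹ (N + 1)
  have htrunc (N : ℕ) : M * eLpNorm (h N) (ENNReal.ofReal τ) μ ≤ K := by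
    refine H.mul_eLpNorm_le_of_le_inv hr hp hτ hrpτ hωpos (hω.inv.min measurable_const)
      (fun x => lt_min (inv_pos.2 (hωpos x)) (by positivity)) (fun x => min_le_left _ _) ?_
    refine (MemLp.of_bound (hω.inv.min measurable_const).aestronglyMeasurable (N + 1)
      (ae_of_all _ fun x => ?_)).eLpNorm_ne_top
    exact (abs_of_nonneg (le_min (inv_pos.2 (hωpos x)).le (by positivity))).trans_le
      (min_le_right _ _)
  have hlim : ∀ x, Tendsto (fun N => h N x) atTop (𝓝 (ω x)⁻¹) := fun x =>
    tendsto_const_nhds.congr' <| (eventually_ge_atTop ⌈(ω x)⁻¹⌉₊).mono fun N hN =>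
      (min_eq_left ((Nat.le_ceil _).trans (by exact_mod_cast hN.trans N.le_succ))).symm
  have hfatou := Lp.eLpNorm_lim_le_liminf_eLpNorm
    (fun N => (hω.inv.min measurable_const).aestronglyMeasurable) _ (ae_of_all μ hlim)
    (p := ENNReal.ofReal τ)
  refine ENNReal.mul_le_of_forall_lt fun a ha b hb => ?_
  obtain ⟨N, hN⟩ := (eventually_lt_of_lt_liminf (hb.trans_le hfatou)).exists
  exact (mul_le_mul' ha.le hN.le).trans (htrunc N)

theorem mul_eLpNorm_inv_le [IsFiniteMeasure μ] (H : WeightedLpBound μ ω r p M K)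
    (hr : 0 < r) (hp : 0 < p) {t : ℝ≥0∞}
    (hrpt : 1 / ENNReal.ofReal r = 1 / ENNReal.ofReal p + 1 / t)
    (hω : Measurable ω) (hωpos : ∀ x, 0 < ω x) :
    M * eLpNorm (fun x => (ω x)⁻¹) t μ ≤ K := by
  have hreal := toReal_add_of_one_div_ofReal_eq hr hrpt
  rw [one_div (ENNReal.ofReal p), ENNReal.toReal_inv, toReal_ofReal hp.le, ← one_div,
    one_div t, ENNReal.toReal_inv, ← one_div] at hreal
  rcases eq_or_ne t ∞ with rfl | ht
  · obtain rfl : r = p := by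
      simpa [one_div, inv_inj] using hreal
    exact H.mul_eLpNorm_inv_top_le hp hω hωpos
  · have ht0 : t ≠ 0 := by
      rintro rfl
      simp only [one_div, ENNReal.inv_zero, add_top, ENNReal.inv_eq_top, ofReal_eq_zero] at hrpt
      linarith
    rw [← ofReal_toReal ht]
    exact H.mul_eLpNorm_inv_le_of_lt_top hr hp (toReal_pos ht0 ht) hreal hω hωpos

end WeightedLpBound

theorem cube_eq_closedBall {n : ℕ} (c : Fin n → ℝ) {ℓ : ℝ} (hℓ : 0 ≤ ℓ) :
    cube n c ℓ = Metric.closedBall c (ℓ / 2) := by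
  ext x
  simp only [cube, mem_ofPred_eq, Metric.mem_closedBall,
    dist_pi_le_iff (by positivity : 0 ≤ ℓ / 2), Real.dist_eq]

theorem stmt16_general (n : ℕ) (r p : ℝ) (hr : 1 ≤ r) (hrp : r ≤ p)
    (β q t u : ℝ≥0∞)
    (ht : 1 / ENNReal.ofReal r = 1 / ENNReal.ofReal p + 1 / t)
    (hu : 1 / ENNReal.ofReal r = 1 / β + 1 / u)
    (ω : (Fin n → ℝ) → ℝ) (hω : Measurable ω) (hωpos : ∀ x, 0 < ω x)
    (C : ℝ)
    (h : ∀ (c : Fin n → ℝ) (ℓ : ℝ), 0 < ℓ →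
      ∀ f : (Fin n → ℝ) → ℝ, Measurable f →
        volume (cube n c ℓ) ^ (1 / β).toReal *
          (volume (cube n c ℓ) ^ (1 / r))⁻¹ *
          eLpNorm ((cube n c ℓ).indicator f) (ENNReal.ofReal r) volume *
          eLpNorm ((cube n c ℓ).indicator ω) q volume ≤
        ENNReal.ofReal C * eLpNorm (fun x => f x * ω x) (ENNReal.ofReal p) volume) :
    ∃ C' : ℝ, ∀ (c : Fin n → ℝ) (ℓ : ℝ), 0 < ℓ →
      eLpNorm ((cube n c ℓ).indicator ω) q volume *
        eLpNorm ((cube n c ℓ).indicator fun x => (ω x)⁻¹) t volume ≤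
      ENNReal.ofReal C' * volume (cube n c ℓ) ^ (1 / u).toReal := by
  refine ⟨C, fun c ℓ hℓ => ?_⟩
  have hr0 : 0 < r := by linarith
  have hQ : MeasurableSet (cube n c ℓ) := cube_eq_closedBall c hℓ.le ▸ measurableSet_closedBall
  have hQ0 : volume (cube n c ℓ) ≠ 0 :=
    cube_eq_closedBall c hℓ.le ▸ (Metric.measure_closedBall_pos _ c (by positivity)).ne'
  have hQtop : volume (cube n c ℓ) ≠ ∞ :=
    cube_eq_closedBall c hℓ.le ▸ measure_closedBall_lt_top.ne
  have := isFiniteMeasure_restrict.2 hQtop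
  have hcube := h c ℓ hℓ
  set Q := cube n c ℓ
  set W := eLpNorm (Q.indicator ω) q volume
  have hQbound : WeightedLpBound (volume.restrict Q) ω r p
      (volume Q ^ (1 / β).toReal * (volume Q ^ (1 / r))⁻¹ * W) (ENNReal.ofReal C) := by
    intro g hg
    have hg := hcube (Q.indicator g) (hg.indicator hQ)
    simp only [indicator_indicator, inter_self, ← indicator_mul_left] at hg
    rwa [eLpNorm_indicator_eq_eLpNorm_restrict hQ (f := g),
      eLpNorm_indicator_eq_eLpNorm_restrict hQ (f := fun x => g x * ω x), mul_right_comm] at hg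
  have hdual := hQbound.mul_eLpNorm_inv_le hr0 (hr0.trans_le hrp) ht hω hωpos
  rw [eLpNorm_indicator_eq_eLpNorm_restrict hQ]
  calc W * eLpNorm (fun x => (ω x)⁻¹) t (volume.restrict Q)
      = volume Q ^ (1 / β).toReal * (volume Q ^ (1 / r))⁻¹ * W *
          eLpNorm (fun x => (ω x)⁻¹) t (volume.restrict Q) * volume Q ^ (1 / u).toReal := by
        rw [toReal_add_of_one_div_ofReal_eq hr0 hu, mul_assoc (_ * _) W, mul_right_comm _ (W * _),
          rpow_mul_inv_rpow_add_mul_rpow hQ0 hQtop, one_mul]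
    _ ≤ ENNReal.ofReal C * volume Q ^ (1 / u).toReal := mul_le_mul_left hdual _

/-- Constant-exponent case of Proposition 3.2(1) (necessity).
Exponents: `1 ≤ r ≤ p ≤ β ≤ ∞` with `1/p = 1/q + 1/β`; `t = pr/(p-r)` is
encoded by `1/r = 1/p + 1/t` and `u = βr/(β-r)` by `1/r = 1/β + 1/u`.
If `‖(A_{β,r,Q} f) ω‖_q ≤ C ‖fω‖_p` for all `f` and cubes `Q`, where
`A_{β,r,Q} f = χ_Q |Q|^{1/β - 1/r} ‖fχ_Q‖_r` (so that its weighted norm equals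
`|Q|^{1/β} |Q|^{-1/r} ‖fχ_Q‖_r ‖ωχ_Q‖_q`), then
`‖ωχ_Q‖_q ‖ω⁻¹χ_Q‖_t ≤ C' |Q|^{1/u}` uniformly over cubes. -/
theorem stmt16 (n : ℕ) (r p : ℝ) (hr : 1 ≤ r) (hrp : r ≤ p)
    (β q t u : ℝ≥0∞)
    (hpβ : ENNReal.ofReal p ≤ β)
    (hpq : 1 / ENNReal.ofReal p = 1 / q + 1 / β)
    (ht : 1 / ENNReal.ofReal r = 1 / ENNReal.ofReal p + 1 / t)
    (hu : 1 / ENNReal.ofReal r = 1 / β + 1 / u)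
    (ω : (Fin n → ℝ) → ℝ) (hω : Measurable ω) (hωpos : ∀ x, 0 < ω x)
    (C : ℝ)
    (h : ∀ (c : Fin n → ℝ) (ℓ : ℝ), 0 < ℓ →
      ∀ f : (Fin n → ℝ) → ℝ, Measurable f →
        volume (cube n c ℓ) ^ (1 / β).toReal *
          (volume (cube n c ℓ) ^ (1 / r))⁻¹ *
          eLpNorm ((cube n c ℓ).indicator f) (ENNReal.ofReal r) volume *
          eLpNorm ((cube n c ℓ).indicator ω) q volume ≤
        ENNReal.ofReal C * eLpNorm (fun x => f x * ω x) (ENNReal.ofReal p) volume) :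
    ∃ C' : ℝ, ∀ (c : Fin n → ℝ) (ℓ : ℝ), 0 < ℓ →
      eLpNorm ((cube n c ℓ).indicator ω) q volume *
        eLpNorm ((cube n c ℓ).indicator fun x => (ω x)⁻¹) t volume ≤
      ENNReal.ofReal C' * volume (cube n c ℓ) ^ (1 / u).toReal :=
  stmt16_general n r p hr hrp β q t u ht hu ω hω hωpos C h
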